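/- Let p > 1 and d ≥ 1 be fixed, and let G be the disjoint union of K_{D,d} and D disjoint cliques of size d+2, with V = full vertex set and V_1 = vertices of K_{D,d}. Then f_p(V) < d^{p−1} + D^{p−1} + (d+1)^p, and consequently lim_{D→∞} f_p(V)/f_p(V_1) ≤ 1/d. -/

import Mathlib

/-!
In the whole graph the `D` vertices of one side of `K_{D,d}` have degree `d`, the `d`
vertices of the other side have degree `D` and every clique vertex has degree `d + 1`; in `V_1`
the degrees are the same, since no edge leaves `V_1`. Hence `f_p(V)` and `f_p(V_1)` are explicit
weighted averages. The bound on `f_p(V)` holds term by term, e.g. `D d^p = (D d) d^(p-1)` with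
`D d < |V|`. For the limit, `d f_p(V) ≤ f_p(V_1)` once `D ≥ d²` and `D^(p-1) ≥ (d+2)(d+1)^p`
(true for large `D` as `p > 1`): the cliques then contribute at most `D^p`, which the term
`d D^p` of `f_p(V_1)` absorbs.
-/

open Filter

/-- Induced degree: `d_v(S)` is the number of neighbors of `v` lying in `S`
if `v ∈ S`, and `0` otherwise. -/
noncomputable def indDeg {V : Type*} [DecidableEq V] (G : SimpleGraph V)
    (S : Finset V) (v : V) : ℕ :=
  if v ∈ S then Nat.card {u : V // u ∈ S ∧ G.Adj v u} else 0

/-- `f_p(S) = (1/|S|) Σ_{v∈S} d_v(S)^p`. -/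
noncomputable def fp {V : Type*} [DecidableEq V] (G : SimpleGraph V)
    (p : ℝ) (S : Finset V) : ℝ :=
  (1 / (S.card : ℝ)) * ∑ v ∈ S, (indDeg G S v : ℝ) ^ p

/-- Disjoint union of the complete bipartite graph `K_{D,d}` and
`D` disjoint cliques, each of size `d+2`. -/
def bipCliqueGraph (D d : ℕ) :
    SimpleGraph ((Fin D ⊕ Fin d) ⊕ (Fin D × Fin (d + 2))) :=
  completeBipartiteGraph (Fin D) (Fin d) ⊕g
    SimpleGraph.fromRel (fun a b : Fin D × Fin (d + 2) => a.1 = b.1)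

/-- The vertex set of the `K_{D,d}` part. -/
def V1 (D d : ℕ) : Finset ((Fin D ⊕ Fin d) ⊕ (Fin D × Fin (d + 2))) :=
  Finset.univ.filter (fun x => x.isLeft)

/-- The vertex set of the union of cliques. -/
def V2 (D d : ℕ) : Finset ((Fin D ⊕ Fin d) ⊕ (Fin D × Fin (d + 2))) :=
  Finset.univ.filter (fun x => x.isRight)

open Finset

section InducedDegree

variable {V : Type*} [DecidableEq V] (G : SimpleGraph V) [DecidableRel G.Adj]

lemma indDeg_of_mem {S : Finset V} {v : V} (hv : v ∈ S) :
    indDeg G S v = #{u ∈ S | G.Adj v u} := by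
  rw [indDeg, if_pos hv, ← Nat.card_eq_finsetCard]
  exact Nat.card_congr (Equiv.subtypeEquivRight fun u => by simp)

lemma indDeg_eq_of_subset_of_closed {S T : Finset V} (hST : S ⊆ T)
    (hS : ∀ v ∈ S, ∀ u, G.Adj v u → u ∈ S) {v : V} (hv : v ∈ S) :
    indDeg G S v = indDeg G T v := by
  rw [indDeg_of_mem G hv, indDeg_of_mem G (hST hv)]
  congr 1
  ext u
  simp only [mem_filter]
  exact ⟨fun h => ⟨hST h.1, h.2⟩, fun h => ⟨hS v hv u h.2, h.2⟩⟩

end InducedDegree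

lemma fp_nonneg {V : Type*} [DecidableEq V] (G : SimpleGraph V) (p : ℝ) (S : Finset V) :
    0 ≤ fp G p S :=
  mul_nonneg (by positivity) (sum_nonneg fun _ _ => Real.rpow_nonneg (Nat.cast_nonneg _) p)

lemma Real.rpow_eq_mul_rpow_sub_one {x : ℝ} (hx : x ≠ 0) (p : ℝ) : x ^ p = x * x ^ (p - 1) := by
  rw [Real.rpow_sub_one hx, mul_div_cancel₀ _ hx]

namespace bipCliqueGraph

variable {D d : ℕ}

open Classical in
lemma indDeg_univ_inl_inl (i : Fin D) :
    indDeg (bipCliqueGraph D d) univ (.inl (.inl i)) = d := by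
  rw [indDeg_of_mem _ (mem_univ _)]
  have hneighbors : ({u | (bipCliqueGraph D d).Adj (.inl (.inl i)) u} : Finset _) =
      univ.map (Function.Embedding.inr.trans Function.Embedding.inl) := by
    ext ((x | y) | z) <;> simp [bipCliqueGraph]
  rw [hneighbors, card_map, card_univ, Fintype.card_fin]

open Classical in
lemma indDeg_univ_inl_inr (j : Fin d) :
    indDeg (bipCliqueGraph D d) univ (.inl (.inr j)) = D := by
  rw [indDeg_of_mem _ (mem_univ _)]
  have hneighbors : ({u | (bipCliqueGraph D d).Adj (.inl (.inr j)) u} : Finset _) =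
      univ.map (Function.Embedding.inl.trans Function.Embedding.inl) := by
    ext ((x | y) | z) <;> simp [bipCliqueGraph]
  rw [hneighbors, card_map, card_univ, Fintype.card_fin]

open Classical in
lemma indDeg_univ_inr (k : Fin D) (m : Fin (d + 2)) :
    indDeg (bipCliqueGraph D d) univ (.inr (k, m)) = d + 1 := by
  rw [indDeg_of_mem _ (mem_univ _)]
  have hneighbors : ({u | (bipCliqueGraph D d).Adj (.inr (k, m)) u} : Finset _) =
      (univ.erase m).map ((Function.Embedding.sectR k _).trans Function.Embedding.inr) := by
    ext ((x | y) | ⟨k', m'⟩) <;> simp [bipCliqueGraph]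
    grind
  rw [hneighbors, card_map, card_erase_of_mem (mem_univ _), card_univ, Fintype.card_fin]
  rfl

lemma V1_eq_map_inl : V1 D d = univ.map Function.Embedding.inl := by
  ext (u | u) <;> simp [V1]

lemma mem_V1_of_adj {v u : (Fin D ⊕ Fin d) ⊕ (Fin D × Fin (d + 2))} (hv : v ∈ V1 D d)
    (h : (bipCliqueGraph D d).Adj v u) : u ∈ V1 D d := by
  rcases v with v | v <;> rcases u with u | u <;> simp_all [V1, bipCliqueGraph]

open Classical in
lemma indDeg_V1_inl (x : Fin D ⊕ Fin d) :
    indDeg (bipCliqueGraph D d) (V1 D d) (.inl x) =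
      indDeg (bipCliqueGraph D d) univ (.inl x) :=
  indDeg_eq_of_subset_of_closed _ (subset_univ _) (fun _ hv _ => mem_V1_of_adj hv)
    (by simp [V1])

lemma fp_univ (p : ℝ) :
    fp (bipCliqueGraph D d) p univ =
      (D * (d : ℝ) ^ p + d * (D : ℝ) ^ p + D * (d + 2) * ((d : ℝ) + 1) ^ p) /
        (D + d + D * (d + 2)) := by
  simp only [fp, Fintype.sum_sum_type, Fintype.sum_prod_type, indDeg_univ_inl_inl,
    indDeg_univ_inl_inr, indDeg_univ_inr, sum_const, card_univ, Fintype.card_sum,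
    Fintype.card_prod, Fintype.card_fin, nsmul_eq_mul]
  push_cast
  ring

lemma fp_V1 (p : ℝ) :
    fp (bipCliqueGraph D d) p (V1 D d) =
      (D * (d : ℝ) ^ p + d * (D : ℝ) ^ p) / (D + d) := by
  rw [fp, V1_eq_map_inl, sum_map, card_map]
  simp only [Function.Embedding.inl_apply]
  rw [← V1_eq_map_inl]
  simp only [indDeg_V1_inl, Fintype.sum_sum_type, indDeg_univ_inl_inl, indDeg_univ_inl_inr,
    sum_const, card_univ, Fintype.card_sum, Fintype.card_fin, nsmul_eq_mul]
  push_cast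
  ring

lemma fp_univ_lt (p : ℝ) (hd : 0 < d) (hD : 0 < D) :
    fp (bipCliqueGraph D d) p univ <
      (d : ℝ) ^ (p - 1) + (D : ℝ) ^ (p - 1) + ((d : ℝ) + 1) ^ p := by
  have hd' : (0 : ℝ) < d := by exact_mod_cast hd
  have hD' : (0 : ℝ) < D := by exact_mod_cast hD
  rw [fp_univ, div_lt_iff₀ (by positivity), Real.rpow_eq_mul_rpow_sub_one hd'.ne' p,
    Real.rpow_eq_mul_rpow_sub_one hD'.ne' p]
  have hX : 0 ≤ (d : ℝ) ^ (p - 1) := by positivity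
  have hY : 0 ≤ (D : ℝ) ^ (p - 1) := by positivity
  have hC : 0 < ((d : ℝ) + 1) ^ p := by positivity
  nlinarith [mul_nonneg hX (by positivity : (0 : ℝ) ≤ 3 * D + d),
    mul_nonneg hY (by positivity : (0 : ℝ) ≤ 3 * D + d),
    mul_pos hC (by positivity : (0 : ℝ) < D + d)]

lemma mul_fp_univ_le_fp_V1 {p : ℝ} (hd : 0 < d) (hdD : d ^ 2 ≤ D)
    (hD : ((d : ℝ) + 2) * ((d : ℝ) + 1) ^ p ≤ (D : ℝ) ^ (p - 1)) :
    d * fp (bipCliqueGraph D d) p univ ≤ fp (bipCliqueGraph D d) p (V1 D d) := by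
  have hd' : (0 : ℝ) < d := by exact_mod_cast hd
  have hdD' : (d : ℝ) ^ 2 ≤ D := by exact_mod_cast hdD
  have hD' : (0 : ℝ) < D := by nlinarith
  rw [fp_univ, fp_V1, mul_div_assoc', div_le_div_iff₀ (by positivity) (by positivity)]
  have hcliques : D * (d + 2) * ((d : ℝ) + 1) ^ p ≤ (D : ℝ) ^ p := by
    rw [Real.rpow_eq_mul_rpow_sub_one hD'.ne' p, mul_assoc]
    exact mul_le_mul_of_nonneg_left hD hD'.le
  have hstar : d * (D : ℝ) ^ p ≤ D * (d : ℝ) ^ p + d * (D : ℝ) ^ p :=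
    le_add_of_nonneg_left (by positivity)
  have hDp : 0 ≤ (D : ℝ) ^ p := by positivity
  -- With `S` and `C ≤ D^p` the `K_{D,d}` and clique parts of the numerator of `f_p(V)`, `N = |V|`:
  -- `N S - d (D + d) (S + C) = (3D + d - d²) S - d (D + d) C ≥ d D^p (2D - d²)`.
  nlinarith [mul_le_mul_of_nonneg_left hstar (by linarith : (0 : ℝ) ≤ 3 * D + d - d ^ 2),
    mul_le_mul_of_nonneg_left hcliques (by positivity : (0 : ℝ) ≤ d * (D + d)),
    mul_nonneg (mul_nonneg hd'.le hDp) (by linarith : (0 : ℝ) ≤ 2 * D - d ^ 2)]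

lemma eventually_mul_fp_univ_le_fp_V1 {p : ℝ} (hp : 1 < p) (hd : 0 < d) :
    ∀ᶠ D in atTop, d * fp (bipCliqueGraph D d) p univ ≤ fp (bipCliqueGraph D d) p (V1 D d) := by
  have hlarge : ∀ᶠ D : ℕ in atTop, ((d : ℝ) + 2) * ((d : ℝ) + 1) ^ p ≤ (D : ℝ) ^ (p - 1) :=
    ((tendsto_rpow_atTop (by linarith)).comp tendsto_natCast_atTop_atTop).eventually_ge_atTop _
  filter_upwards [eventually_ge_atTop (d ^ 2), hlarge] with D hdD hD
  exact mul_fp_univ_le_fp_V1 hd hdD hD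

end bipCliqueGraph

theorem simplePeel_whole_graph_bound (p : ℝ) (hp : 1 < p)
    (d : ℕ) (hd : 1 ≤ d) :
    (∀ D : ℕ, 0 < D →
      fp (bipCliqueGraph D d) p Finset.univ <
        (d : ℝ) ^ (p - 1) + (D : ℝ) ^ (p - 1) + ((d : ℝ) + 1) ^ p) ∧
    Filter.limsup (fun D : ℕ =>
        fp (bipCliqueGraph D d) p Finset.univ /
          fp (bipCliqueGraph D d) p (V1 D d)) atTop ≤ 1 / (d : ℝ) := by
  refine ⟨fun D hD => bipCliqueGraph.fp_univ_lt p hd hD, ?_⟩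
  have hd' : (0 : ℝ) < d := by exact_mod_cast hd
  have hratio_nonneg (D : ℕ) :
      0 ≤ fp (bipCliqueGraph D d) p univ / fp (bipCliqueGraph D d) p (V1 D d) :=
    div_nonneg (fp_nonneg _ _ _) (fp_nonneg _ _ _)
  refine limsup_le_of_le (isBoundedUnder_of ⟨0, hratio_nonneg⟩).isCoboundedUnder_le ?_
  filter_upwards [bipCliqueGraph.eventually_mul_fp_univ_le_fp_V1 hp hd] with D hD
  refine div_le_of_le_mul₀ (fp_nonneg _ _ _) (by positivity) ?_
  rwa [one_div, ← div_eq_inv_mul, le_div_iff₀' hd']
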